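/- arXiv:2601.17695 — 10 statements merged into one kernel-verified Lean document; each statement's English description precedes it below -/
import Mathlib

section
/- In the bidirectional structural model under Assumption 1, suppose σ > 0, μxz ≠ 0, μyw ≠ 0, βxy·βyx ≠ 1 and βxy·βyx ≠ −1. Define c = 1/(1 − βxy·βyx), λ1 = σ²c²(1 + βyx²), λ2 = σ²c²(1 + βxy²), and the Probit coefficients ξxz = c·μxz/√λ1, ξxw = c·βyx·μyw/√λ1, ξyz = c·βxy·μxz/√λ2, ξyw = c·μyw/√λ2. Then the forward causal effect is identified by the formula βxy = (ξyz/ξxz)·√((ξxw²·ξxz² − ξyw²·ξxz²)/(ξyz²·ξyw² − ξyw²·ξxz²)). -/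
/-!
Write `tᵢ = λᵢ⁻¹` and `A = (c μxz)²`, `B = (c μyw)²`, so that `ξxz² = A t₁`, `ξxw² = βyx² B t₁`,
`ξyz² = βxy² A t₂`, `ξyw² = B t₂`. The numerator under the root is `A B t₁ (βyx² t₁ - t₂)` and the
denominator is `A B t₂ (βxy² t₂ - t₁)`; since `λ₁ / (1 + βyx²) = λ₂ / (1 + βxy²) = σ² c²`, the two
brackets coincide, and they vanish only when `(βxy βyx)² = 1`. Hence the root is `√(λ₂ / λ₁)`, which
exactly cancels the scale ratio in `ξyz / ξxz = βxy √λ₁ / √λ₂`.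
-/

lemma div_sqrt_sq (x : ℝ) {y : ℝ} (hy : 0 ≤ y) : (x / √y) ^ 2 = x ^ 2 * y⁻¹ := by
  rw [div_pow, Real.sq_sqrt hy, div_eq_mul_inv]

lemma sq_sub_sq_ratio_eq {ξxz ξxw ξyz ξyw A B a b t₁ t₂ : ℝ}
    (hA : A ≠ 0) (hB : B ≠ 0)
    (hxz : ξxz ^ 2 = A * t₁) (hxw : ξxw ^ 2 = a ^ 2 * B * t₁)
    (hyz : ξyz ^ 2 = b ^ 2 * A * t₂) (hyw : ξyw ^ 2 = B * t₂)
    (hbal : (1 + a ^ 2) * t₁ = (1 + b ^ 2) * t₂) (hne : a ^ 2 * t₁ ≠ t₂) :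
    (ξxw ^ 2 * ξxz ^ 2 - ξyw ^ 2 * ξxz ^ 2) / (ξyz ^ 2 * ξyw ^ 2 - ξyw ^ 2 * ξxz ^ 2)
      = t₁ / t₂ := by
  have hnum : ξxw ^ 2 * ξxz ^ 2 - ξyw ^ 2 * ξxz ^ 2 = A * B * t₁ * (a ^ 2 * t₁ - t₂) := by
    rw [hxw, hxz, hyw]; ring
  have hden : ξyz ^ 2 * ξyw ^ 2 - ξyw ^ 2 * ξxz ^ 2 = A * B * t₂ * (a ^ 2 * t₁ - t₂) := by
    rw [hyz, hyw, hxz]; linear_combination (-(A * B * t₂)) * hbal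
  rw [hnum, hden, mul_div_mul_right _ _ (sub_ne_zero.mpr hne),
    mul_div_mul_left _ _ (mul_ne_zero hA hB)]

lemma sq_mul_sq_ne_one {a b : ℝ} (h1 : a * b ≠ 1) (h2 : a * b ≠ -1) : a ^ 2 * b ^ 2 ≠ 1 := by
  rw [← mul_pow, Ne, sq_eq_one_iff]
  exact not_or.mpr ⟨h1, h2⟩

theorem stmt_5_general (μxz μyw βxy βyx σ : ℝ)
    (hσ : 0 < σ) (hμxz : μxz ≠ 0) (hμyw : μyw ≠ 0)
    (h1 : βxy * βyx ≠ 1) (h2 : βxy * βyx ≠ -1)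
    (c lam1 lam2 ξxz ξxw ξyz ξyw : ℝ)
    (hc : c = 1 / (1 - βxy * βyx))
    (hlam1 : lam1 = σ ^ 2 * c ^ 2 * (1 + βyx ^ 2))
    (hlam2 : lam2 = σ ^ 2 * c ^ 2 * (1 + βxy ^ 2))
    (hξxz : ξxz = c * μxz / Real.sqrt lam1)
    (hξxw : ξxw = c * βyx * μyw / Real.sqrt lam1)
    (hξyz : ξyz = c * βxy * μxz / Real.sqrt lam2)
    (hξyw : ξyw = c * μyw / Real.sqrt lam2) :
    βxy = (ξyz / ξxz) * Real.sqrt ((ξxw ^ 2 * ξxz ^ 2 - ξyw ^ 2 * ξxz ^ 2) /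
      (ξyz ^ 2 * ξyw ^ 2 - ξyw ^ 2 * ξxz ^ 2)) := by
  have hc0 : c ≠ 0 := by rw [hc]; exact one_div_ne_zero (sub_ne_zero.mpr h1.symm)
  have hl1 : 0 < lam1 := by rw [hlam1]; positivity
  have hl2 : 0 < lam2 := by rw [hlam2]; positivity
  have hbal : (1 + βyx ^ 2) * lam1⁻¹ = (1 + βxy ^ 2) * lam2⁻¹ := by
    rw [hlam1, hlam2]; field_simp
  have hne : βyx ^ 2 * lam1⁻¹ ≠ lam2⁻¹ := by
    intro h
    rw [hlam1, hlam2] at h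
    field_simp at h
    exact sq_mul_sq_ne_one h1 h2 (by linear_combination h)
  have hratio : (ξxw ^ 2 * ξxz ^ 2 - ξyw ^ 2 * ξxz ^ 2) / (ξyz ^ 2 * ξyw ^ 2 - ξyw ^ 2 * ξxz ^ 2)
      = lam2 / lam1 := by
    rw [← inv_div_inv lam1]
    refine sq_sub_sq_ratio_eq (A := (c * μxz) ^ 2) (B := (c * μyw) ^ 2) (by positivity)
      (by positivity) ?_ ?_ ?_ ?_ hbal hne
    · rw [hξxz, div_sqrt_sq _ hl1.le]
    · rw [hξxw, div_sqrt_sq _ hl1.le]; ring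
    · rw [hξyz, div_sqrt_sq _ hl2.le]; ring
    · rw [hξyw, div_sqrt_sq _ hl2.le]
  have hs1 : 0 < √lam1 := Real.sqrt_pos.mpr hl1
  have hs2 : 0 < √lam2 := Real.sqrt_pos.mpr hl2
  rw [hratio, Real.sqrt_div hl2.le, hξyz, hξxz]
  field_simp

/-- Proposition 1, forward direction: identification of the
forward causal effect in the bidirectional structural model under Assumption 1. -/
theorem stmt_5 (μx0 μy0 μxz μyw βxy βyx σ : ℝ)
    (hσ : 0 < σ) (hμxz : μxz ≠ 0) (hμyw : μyw ≠ 0)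
    (h1 : βxy * βyx ≠ 1) (h2 : βxy * βyx ≠ -1)
    (c lam1 lam2 ξxz ξxw ξyz ξyw : ℝ)
    (hc : c = 1 / (1 - βxy * βyx))
    (hlam1 : lam1 = σ ^ 2 * c ^ 2 * (1 + βyx ^ 2))
    (hlam2 : lam2 = σ ^ 2 * c ^ 2 * (1 + βxy ^ 2))
    (hξxz : ξxz = c * μxz / Real.sqrt lam1)
    (hξxw : ξxw = c * βyx * μyw / Real.sqrt lam1)
    (hξyz : ξyz = c * βxy * μxz / Real.sqrt lam2)
    (hξyw : ξyw = c * μyw / Real.sqrt lam2) :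
    βxy = (ξyz / ξxz) * Real.sqrt ((ξxw ^ 2 * ξxz ^ 2 - ξyw ^ 2 * ξxz ^ 2) /
      (ξyz ^ 2 * ξyw ^ 2 - ξyw ^ 2 * ξxz ^ 2)) :=
  stmt_5_general μxz μyw βxy βyx σ hσ hμxz hμyw h1 h2 c lam1 lam2 ξxz ξxw ξyz ξyw hc hlam1 hlam2
    hξxz hξxw hξyz hξyw
end

section
/- In the bidirectional structural model under Assumption 1, with σ > 0 and βxy·βyx ≠ 1, define c = 1/(1 − βxy·βyx), λ1 = σ²c²(1 + βyx²), λ2 = σ²c²(1 + βxy²), and Probit coefficients ξxz = c·μxz/√λ1, ξxw = c·βyx·μyw/√λ1, ξyz = c·βxy·μxz/√λ2, ξyw = c·μyw/√λ2. Then the identity (ξxw² − ξyw²)·μxz² = (ξyz² − ξxz²)·μyw² holds; in particular the two differences ξxw² − ξyw² and ξyz² − ξxz² always have the same sign, so the radicands appearing in the identification formulas of Proposition 1 are nonnegative. -/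
/-!
Write `λ₁ = s (1 + βyx²)`, `λ₂ = s (1 + βxy²)` with `s = σ²c²`. Squaring removes the square
roots, so `ξxw² − ξyw² = c² μyw² D` and `ξyz² − ξxz² = c² μxz² D` with the *same* factor
`D = βyx²/λ₁ − 1/λ₂ = βxy²/λ₂ − 1/λ₁`: the two expressions for `D` agree because
`(1 + β²)/λ = 1/s` for either equation. The identity and the sign claim follow at once.
-/

lemma Real.sq_div_sqrt (a : ℝ) {b : ℝ} (hb : 0 ≤ b) : (a / √b) ^ 2 = a ^ 2 / b := by
  rw [div_pow, Real.sq_sqrt hb]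

lemma sq_div_sub_one_div_symm (s p q : ℝ) :
    q ^ 2 / (s * (1 + q ^ 2)) - 1 / (s * (1 + p ^ 2)) =
      p ^ 2 / (s * (1 + p ^ 2)) - 1 / (s * (1 + q ^ 2)) := by
  have key (r : ℝ) : r ^ 2 / (s * (1 + r ^ 2)) + 1 / (s * (1 + r ^ 2)) = s⁻¹ := by
    rw [← add_div, add_comm, div_mul_cancel_right₀ (by positivity)]
  linarith [key p, key q]

theorem stmt_7_general (μxz μyw βxy βyx σ : ℝ)
    (c lam1 lam2 ξxz ξxw ξyz ξyw : ℝ)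
    (hlam1 : lam1 = σ ^ 2 * c ^ 2 * (1 + βyx ^ 2))
    (hlam2 : lam2 = σ ^ 2 * c ^ 2 * (1 + βxy ^ 2))
    (hξxz : ξxz = c * μxz / Real.sqrt lam1)
    (hξxw : ξxw = c * βyx * μyw / Real.sqrt lam1)
    (hξyz : ξyz = c * βxy * μxz / Real.sqrt lam2)
    (hξyw : ξyw = c * μyw / Real.sqrt lam2) :
    (ξxw ^ 2 - ξyw ^ 2) * μxz ^ 2 = (ξyz ^ 2 - ξxz ^ 2) * μyw ^ 2 ∧
    0 ≤ (ξxw ^ 2 - ξyw ^ 2) * (ξyz ^ 2 - ξxz ^ 2) := by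
  have hlam1_nonneg : 0 ≤ lam1 := hlam1 ▸ by positivity
  have hlam2_nonneg : 0 ≤ lam2 := hlam2 ▸ by positivity
  set D := βyx ^ 2 / lam1 - 1 / lam2 with hD
  have hD' : D = βxy ^ 2 / lam2 - 1 / lam1 := by
    rw [hD, hlam1, hlam2]
    exact sq_div_sub_one_div_symm _ _ _
  have hx : ξxw ^ 2 - ξyw ^ 2 = c ^ 2 * μyw ^ 2 * D := by
    rw [hξxw, hξyw, Real.sq_div_sqrt _ hlam1_nonneg, Real.sq_div_sqrt _ hlam2_nonneg, hD]
    ring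
  have hy : ξyz ^ 2 - ξxz ^ 2 = c ^ 2 * μxz ^ 2 * D := by
    rw [hξyz, hξxz, Real.sq_div_sqrt _ hlam1_nonneg, Real.sq_div_sqrt _ hlam2_nonneg, hD']
    ring
  rw [hx, hy]
  exact ⟨by ring, (sq_nonneg (c ^ 2 * μyw * μxz * D)).trans_eq (by ring)⟩

/-- the key identity relating the differences of squared Probit
coefficients, which in particular shows that the two differences always have
the same sign (their product is nonnegative), so the radicands in the
identification formulas of Proposition 1 are nonnegative. -/
theorem stmt_7 (μx0 μy0 μxz μyw βxy βyx σ : ℝ)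
    (hσ : 0 < σ) (hβ : βxy * βyx ≠ 1)
    (c lam1 lam2 ξxz ξxw ξyz ξyw : ℝ)
    (hc : c = 1 / (1 - βxy * βyx))
    (hlam1 : lam1 = σ ^ 2 * c ^ 2 * (1 + βyx ^ 2))
    (hlam2 : lam2 = σ ^ 2 * c ^ 2 * (1 + βxy ^ 2))
    (hξxz : ξxz = c * μxz / Real.sqrt lam1)
    (hξxw : ξxw = c * βyx * μyw / Real.sqrt lam1)
    (hξyz : ξyz = c * βxy * μxz / Real.sqrt lam2)
    (hξyw : ξyw = c * μyw / Real.sqrt lam2) :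
    (ξxw ^ 2 - ξyw ^ 2) * μxz ^ 2 = (ξyz ^ 2 - ξxz ^ 2) * μyw ^ 2 ∧
    0 ≤ (ξxw ^ 2 - ξyw ^ 2) * (ξyz ^ 2 - ξxz ^ 2) :=
  stmt_7_general μxz μyw βxy βyx σ c lam1 lam2 ξxz ξxw ξyz ξyw hlam1 hlam2 hξxz hξxw hξyz hξyw
end

section
/- In the bidirectional structural model under Assumption 2, suppose σ > 0, γ1 > γ2², μxz ≠ 0, μyw ≠ 0 and βxy·βyx ≠ 1. Define c = 1/(1 − βxy·βyx), λ1 = σ²c²(γ1 + 2βyx·γ2 + βyx²), λ2 = σ²c²(βxy²·γ1 + 2βxy·γ2 + 1), and Probit coefficients ξxz = c·μxz/√λ1, ξxw = c·βyx·μyw/√λ1, ξyz = c·βxy·μxz/√λ2, ξyw = c·μyw/√λ2. Then λ1 > 0 and λ2 > 0, the product ξyz·ξxz has the same sign as βxy (and is zero exactly when βxy = 0), and the product ξxw·ξyw has the same sign as βyx (and is zero exactly when βyx = 0). -/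
/-!
Up to the factor `σ² c²`, both reduced-form variances are values of the quadratic form
`(a, b) ↦ γ₁ a² + 2γ₂ ab + b² = (b + γ₂ a)² + (γ₁ - γ₂²) a²` of the covariance of `(U, V)`, which is
positive definite exactly when `γ₂² < γ₁`; hence `λ₁, λ₂ > 0`. Each product of Probit coefficients
then equals the causal effect times the positive factor `(c μ)² / (√λ₁ √λ₂)`.
-/

lemma confounder_form_pos {γ1 γ2 a b : ℝ} (hγ : γ2 ^ 2 < γ1) (hab : a ≠ 0 ∨ b ≠ 0) :
    0 < γ1 * a ^ 2 + 2 * γ2 * a * b + b ^ 2 := by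
  rcases eq_or_ne a 0 with rfl | ha
  · simpa using sq_pos_of_ne_zero (hab.resolve_left (not_not.mpr rfl))
  · have hdef : 0 < (γ1 - γ2 ^ 2) * a ^ 2 := mul_pos (sub_pos.mpr hγ) (sq_pos_of_ne_zero ha)
    nlinarith [sq_nonneg (b + γ2 * a)]

lemma Real.sign_mul_of_pos (b : ℝ) {K : ℝ} (hK : 0 < K) : Real.sign (b * K) = Real.sign b := by
  rcases lt_trichotomy b 0 with hb | rfl | hb
  · rw [Real.sign_of_neg hb, Real.sign_of_neg (mul_neg_of_neg_of_pos hb hK)]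
  · rw [zero_mul]
  · rw [Real.sign_of_pos hb, Real.sign_of_pos (mul_pos hb hK)]

lemma sign_mul_div_mul_div {c β μ s t : ℝ} (hc : c ≠ 0) (hμ : μ ≠ 0) (hs : 0 < s) (ht : 0 < t) :
    Real.sign (c * β * μ / s * (c * μ / t)) = Real.sign β ∧
      (c * β * μ / s * (c * μ / t) = 0 ↔ β = 0) := by
  have hK : 0 < (c * μ) ^ 2 / (s * t) := by positivity
  have key : c * β * μ / s * (c * μ / t) = β * ((c * μ) ^ 2 / (s * t)) := by ring
  rw [key, Real.sign_mul_of_pos β hK, mul_eq_zero]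
  exact ⟨rfl, or_iff_left hK.ne'⟩

theorem stmt_8_general (μxz μyw βxy βyx σ γ1 γ2 : ℝ)
    (hσ : 0 < σ) (hγ : γ2 ^ 2 < γ1)
    (hμxz : μxz ≠ 0) (hμyw : μyw ≠ 0) (hβ : βxy * βyx ≠ 1)
    (c lam1 lam2 ξxz ξxw ξyz ξyw : ℝ)
    (hc : c = 1 / (1 - βxy * βyx))
    (hlam1 : lam1 = σ ^ 2 * c ^ 2 * (γ1 + 2 * βyx * γ2 + βyx ^ 2))
    (hlam2 : lam2 = σ ^ 2 * c ^ 2 * (βxy ^ 2 * γ1 + 2 * βxy * γ2 + 1))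
    (hξxz : ξxz = c * μxz / Real.sqrt lam1)
    (hξxw : ξxw = c * βyx * μyw / Real.sqrt lam1)
    (hξyz : ξyz = c * βxy * μxz / Real.sqrt lam2)
    (hξyw : ξyw = c * μyw / Real.sqrt lam2) :
    0 < lam1 ∧ 0 < lam2 ∧
    Real.sign (ξyz * ξxz) = Real.sign βxy ∧ (ξyz * ξxz = 0 ↔ βxy = 0) ∧
    Real.sign (ξxw * ξyw) = Real.sign βyx ∧ (ξxw * ξyw = 0 ↔ βyx = 0) := by
  have hc0 : c ≠ 0 := by
    rw [hc]
    exact one_div_ne_zero (sub_ne_zero.mpr (Ne.symm hβ))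
  have hq1 := confounder_form_pos (a := 1) (b := βyx) hγ (Or.inl one_ne_zero)
  have hq2 := confounder_form_pos (a := βxy) (b := 1) hγ (Or.inr one_ne_zero)
  have h1 : 0 < lam1 := by
    rw [hlam1]; exact mul_pos (by positivity) (by linarith)
  have h2 : 0 < lam2 := by
    rw [hlam2]; exact mul_pos (by positivity) (by linarith)
  have hs1 := Real.sqrt_pos.mpr h1
  have hs2 := Real.sqrt_pos.mpr h2
  rw [hξyz, hξxz, hξxw, hξyw]
  obtain ⟨hsign_xy, hzero_xy⟩ := sign_mul_div_mul_div (β := βxy) hc0 hμxz hs2 hs1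
  obtain ⟨hsign_yx, hzero_yx⟩ := sign_mul_div_mul_div (β := βyx) hc0 hμyw hs1 hs2
  exact ⟨h1, h2, hsign_xy, hzero_xy, hsign_yx, hzero_yx⟩

/-- under Assumption 2, the reduced-form scales are positive and
the products of Probit coefficients carry the signs of the causal effects. -/
theorem stmt_8 (μx0 μy0 μxz μyw βxy βyx σ γ1 γ2 : ℝ)
    (hσ : 0 < σ) (hγ : γ2 ^ 2 < γ1)
    (hμxz : μxz ≠ 0) (hμyw : μyw ≠ 0) (hβ : βxy * βyx ≠ 1)
    (c lam1 lam2 ξxz ξxw ξyz ξyw : ℝ)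
    (hc : c = 1 / (1 - βxy * βyx))
    (hlam1 : lam1 = σ ^ 2 * c ^ 2 * (γ1 + 2 * βyx * γ2 + βyx ^ 2))
    (hlam2 : lam2 = σ ^ 2 * c ^ 2 * (βxy ^ 2 * γ1 + 2 * βxy * γ2 + 1))
    (hξxz : ξxz = c * μxz / Real.sqrt lam1)
    (hξxw : ξxw = c * βyx * μyw / Real.sqrt lam1)
    (hξyz : ξyz = c * βxy * μxz / Real.sqrt lam2)
    (hξyw : ξyw = c * μyw / Real.sqrt lam2) :
    0 < lam1 ∧ 0 < lam2 ∧
    Real.sign (ξyz * ξxz) = Real.sign βxy ∧ (ξyz * ξxz = 0 ↔ βxy = 0) ∧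
    Real.sign (ξxw * ξyw) = Real.sign βyx ∧ (ξxw * ξyw = 0 ↔ βyx = 0) :=
  stmt_8_general μxz μyw βxy βyx σ γ1 γ2 hσ hγ hμxz hμyw hβ c lam1 lam2 ξxz ξxw ξyz ξyw hc hlam1
    hlam2 hξxz hξxw hξyz hξyw
end

section
/- In the bidirectional structural model under Assumption 2, suppose σ > 0, γ1 > γ2², μxz ≠ 0, μyw ≠ 0 and βxy·βyx ≠ 1. With c = 1/(1 − βxy·βyx), λ1 = σ²c²(γ1 + 2βyx·γ2 + βyx²), λ2 = σ²c²(βxy²·γ1 + 2βxy·γ2 + 1), Probit coefficients ξxz = c·μxz/√λ1, ξxw = c·βyx·μyw/√λ1, ξyz = c·βxy·μxz/√λ2, ξyw = c·μyw/√λ2, and the ratios k1 = ξyz/ξxz and k2 = ξxw/ξyw, the product identity k1·k2 = βxy·βyx holds. -/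
/-! The normalisations `√λ₁`, `√λ₂` enter `k₁` and `k₂` as reciprocal factors
`√λ₁ / √λ₂` and `√λ₂ / √λ₁`, so they cancel in the product; the only real work is
to see that they are nonzero, which holds because `λ₁`, `λ₂` are values of the
positive definite form with matrix `[[γ₁, γ₂], [γ₂, 1]]`. -/

lemma covariance_form_pos {γ1 γ2 s t : ℝ} (hγ : γ2 ^ 2 < γ1) (hst : s ≠ 0 ∨ t ≠ 0) :
    0 < γ1 * s ^ 2 + 2 * γ2 * s * t + t ^ 2 := by
  have hsq : γ1 * s ^ 2 + 2 * γ2 * s * t + t ^ 2 = (t + γ2 * s) ^ 2 + (γ1 - γ2 ^ 2) * s ^ 2 := by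
    ring
  rw [hsq]
  rcases eq_or_ne s 0 with rfl | hs
  · have ht : t ≠ 0 := hst.resolve_left (not_not.mpr rfl)
    simpa using sq_pos_of_ne_zero ht
  · have : 0 < (γ1 - γ2 ^ 2) * s ^ 2 := mul_pos (by linarith) (by positivity)
    positivity

lemma sqrt_scaled_form_ne_zero {σ c q : ℝ} (hσ : 0 < σ) (hc : c ≠ 0) (hq : 0 < q) :
    Real.sqrt (σ ^ 2 * c ^ 2 * q) ≠ 0 :=
  (Real.sqrt_pos.mpr (by positivity)).ne'

lemma div_mul_div_of_scaled_ratios {c a b m n s₁ s₂ : ℝ} (hc : c ≠ 0) (hm : m ≠ 0)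
    (hn : n ≠ 0) (hs₁ : s₁ ≠ 0) (hs₂ : s₂ ≠ 0) :
    (c * a * m / s₂) / (c * m / s₁) * ((c * b * n / s₁) / (c * n / s₂)) = a * b := by
  field_simp

theorem stmt_9_general (μxz μyw βxy βyx σ γ1 γ2 : ℝ)
    (hσ : 0 < σ) (hγ : γ2 ^ 2 < γ1)
    (hμxz : μxz ≠ 0) (hμyw : μyw ≠ 0) (hβ : βxy * βyx ≠ 1)
    (c lam1 lam2 ξxz ξxw ξyz ξyw k1 k2 : ℝ)
    (hc : c = 1 / (1 - βxy * βyx))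
    (hlam1 : lam1 = σ ^ 2 * c ^ 2 * (γ1 + 2 * βyx * γ2 + βyx ^ 2))
    (hlam2 : lam2 = σ ^ 2 * c ^ 2 * (βxy ^ 2 * γ1 + 2 * βxy * γ2 + 1))
    (hξxz : ξxz = c * μxz / Real.sqrt lam1)
    (hξxw : ξxw = c * βyx * μyw / Real.sqrt lam1)
    (hξyz : ξyz = c * βxy * μxz / Real.sqrt lam2)
    (hξyw : ξyw = c * μyw / Real.sqrt lam2)
    (hk1 : k1 = ξyz / ξxz) (hk2 : k2 = ξxw / ξyw) :
    k1 * k2 = βxy * βyx := by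
  have hc0 : c ≠ 0 := by
    rw [hc]
    exact one_div_ne_zero (sub_ne_zero.mpr (Ne.symm hβ))
  have hq1 : 0 < γ1 + 2 * βyx * γ2 + βyx ^ 2 := by
    linarith [covariance_form_pos (s := 1) (t := βyx) hγ (.inl one_ne_zero)]
  have hq2 : 0 < βxy ^ 2 * γ1 + 2 * βxy * γ2 + 1 := by
    linarith [covariance_form_pos (s := βxy) (t := 1) hγ (.inr one_ne_zero)]
  have hs1 : Real.sqrt lam1 ≠ 0 := hlam1 ▸ sqrt_scaled_form_ne_zero hσ hc0 hq1
  have hs2 : Real.sqrt lam2 ≠ 0 := hlam2 ▸ sqrt_scaled_form_ne_zero hσ hc0 hq2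
  rw [hk1, hk2, hξxz, hξxw, hξyz, hξyw]
  exact div_mul_div_of_scaled_ratios hc0 hμxz hμyw hs1 hs2

/-- the product of the Probit coefficient ratios equals the
product of the bidirectional causal effects under Assumption 2. -/
theorem stmt_9 (μx0 μy0 μxz μyw βxy βyx σ γ1 γ2 : ℝ)
    (hσ : 0 < σ) (hγ : γ2 ^ 2 < γ1)
    (hμxz : μxz ≠ 0) (hμyw : μyw ≠ 0) (hβ : βxy * βyx ≠ 1)
    (c lam1 lam2 ξxz ξxw ξyz ξyw k1 k2 : ℝ)
    (hc : c = 1 / (1 - βxy * βyx))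
    (hlam1 : lam1 = σ ^ 2 * c ^ 2 * (γ1 + 2 * βyx * γ2 + βyx ^ 2))
    (hlam2 : lam2 = σ ^ 2 * c ^ 2 * (βxy ^ 2 * γ1 + 2 * βxy * γ2 + 1))
    (hξxz : ξxz = c * μxz / Real.sqrt lam1)
    (hξxw : ξxw = c * βyx * μyw / Real.sqrt lam1)
    (hξyz : ξyz = c * βxy * μxz / Real.sqrt lam2)
    (hξyw : ξyw = c * μyw / Real.sqrt lam2)
    (hk1 : k1 = ξyz / ξxz) (hk2 : k2 = ξxw / ξyw) :
    k1 * k2 = βxy * βyx :=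
  stmt_9_general μxz μyw βxy βyx σ γ1 γ2 hσ hγ hμxz hμyw hβ c lam1 lam2 ξxz ξxw ξyz ξyw k1 k2 hc
    hlam1 hlam2 hξxz hξxw hξyz hξyw hk1 hk2
end

section
/- In the bidirectional structural model under Assumption 2, suppose σ > 0, γ1 > γ2², μxz ≠ 0, μyw ≠ 0 and βxy·βyx ≠ 1, and let k1 = ξyz/ξxz and k2 = ξxw/ξyw be the Probit coefficient ratios. Then the forward causal effect βxy is a root of the quadratic equation γ1·(k1² − 1)·x² + 2γ2·k1·(k1 − k2)·x + k1²·(1 − k2²) = 0. -/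
/-!
Both Probit coefficient ratios are governed by the single ratio `r = √λ1 / √λ2`:
`k1 = βxy r` and `k2 = βyx / r`. Since `λ1` and `λ2` share the factor `σ² c²`,
`r² = Q(1, βyx) / Q(βxy, 1)` for the positive definite form `Q(a, b) = γ1 a² + 2 γ2 a b + b²`,
and eliminating `r` from these relations leaves the quadratic in `βxy`.
-/

lemma quadratic_form_pos {γ1 γ2 : ℝ} (hγ : γ2 ^ 2 < γ1) {a b : ℝ} (hab : a ≠ 0 ∨ b ≠ 0) :
    0 < γ1 * a ^ 2 + 2 * γ2 * a * b + b ^ 2 := by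
  rcases eq_or_ne a 0 with rfl | ha
  · simpa [sq_pos_iff] using hab
  · have ha2 : 0 < a ^ 2 := by positivity
    nlinarith [sq_nonneg (γ2 * a + b), mul_pos ha2 (sub_pos.mpr hγ)]

lemma quadratic_root_of_ratio_sq {γ1 γ2 βxy βyx r : ℝ} (hr : r ≠ 0)
    (hratio : r ^ 2 * (γ1 * βxy ^ 2 + 2 * γ2 * βxy + 1) = γ1 + 2 * γ2 * βyx + βyx ^ 2) :
    γ1 * ((βxy * r) ^ 2 - 1) * βxy ^ 2 + 2 * γ2 * (βxy * r) * (βxy * r - βyx / r) * βxy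
      + (βxy * r) ^ 2 * (1 - (βyx / r) ^ 2) = 0 := by
  field_simp
  linear_combination βxy ^ 2 * hratio

lemma sqrt_div_sqrt_sq_mul {K A B : ℝ} (hK : 0 < K) (hA : 0 < A) (hB : 0 < B) :
    (√(K * A) / √(K * B)) ^ 2 * B = A := by
  rw [div_pow, Real.sq_sqrt (by positivity), Real.sq_sqrt (by positivity)]
  field_simp

theorem stmt_11_general (μxz μyw βxy βyx σ γ1 γ2 : ℝ)
    (hσ : 0 < σ) (hγ : γ2 ^ 2 < γ1)
    (hμxz : μxz ≠ 0) (hμyw : μyw ≠ 0) (hβ : βxy * βyx ≠ 1)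
    (c lam1 lam2 ξxz ξxw ξyz ξyw k1 k2 : ℝ)
    (hc : c = 1 / (1 - βxy * βyx))
    (hlam1 : lam1 = σ ^ 2 * c ^ 2 * (γ1 + 2 * βyx * γ2 + βyx ^ 2))
    (hlam2 : lam2 = σ ^ 2 * c ^ 2 * (βxy ^ 2 * γ1 + 2 * βxy * γ2 + 1))
    (hξxz : ξxz = c * μxz / Real.sqrt lam1)
    (hξxw : ξxw = c * βyx * μyw / Real.sqrt lam1)
    (hξyz : ξyz = c * βxy * μxz / Real.sqrt lam2)
    (hξyw : ξyw = c * μyw / Real.sqrt lam2)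
    (hk1 : k1 = ξyz / ξxz) (hk2 : k2 = ξxw / ξyw) :
    γ1 * (k1 ^ 2 - 1) * βxy ^ 2 + 2 * γ2 * k1 * (k1 - k2) * βxy
      + k1 ^ 2 * (1 - k2 ^ 2) = 0 := by
  have hc0 : c ≠ 0 := by
    rw [hc]; exact one_div_ne_zero (sub_ne_zero.mpr (Ne.symm hβ))
  have hK : 0 < σ ^ 2 * c ^ 2 := by positivity
  have hA : 0 < γ1 + 2 * βyx * γ2 + βyx ^ 2 := by
    linarith [quadratic_form_pos hγ (a := 1) (b := βyx) (.inl one_ne_zero)]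
  have hB : 0 < βxy ^ 2 * γ1 + 2 * βxy * γ2 + 1 := by
    linarith [quadratic_form_pos hγ (a := βxy) (b := 1) (.inr one_ne_zero)]
  have hs1 : 0 < √lam1 := Real.sqrt_pos.mpr (hlam1 ▸ mul_pos hK hA)
  have hs2 : 0 < √lam2 := Real.sqrt_pos.mpr (hlam2 ▸ mul_pos hK hB)
  have hr : (√lam1 / √lam2) ^ 2 * (γ1 * βxy ^ 2 + 2 * γ2 * βxy + 1)
      = γ1 + 2 * γ2 * βyx + βyx ^ 2 := by
    rw [hlam1, hlam2]
    convert sqrt_div_sqrt_sq_mul hK hA hB using 2 <;> ring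
  have hk1' : k1 = βxy * (√lam1 / √lam2) := by
    rw [hk1, hξyz, hξxz]; field_simp
  have hk2' : k2 = βyx / (√lam1 / √lam2) := by
    rw [hk2, hξxw, hξyw]; field_simp
  rw [hk1', hk2']
  exact quadratic_root_of_ratio_sq (by positivity) hr

/-- the forward causal effect is a root of the sensitivity
quadratic equation under Assumption 2. -/
theorem stmt_11 (μx0 μy0 μxz μyw βxy βyx σ γ1 γ2 : ℝ)
    (hσ : 0 < σ) (hγ : γ2 ^ 2 < γ1)
    (hμxz : μxz ≠ 0) (hμyw : μyw ≠ 0) (hβ : βxy * βyx ≠ 1)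
    (c lam1 lam2 ξxz ξxw ξyz ξyw k1 k2 : ℝ)
    (hc : c = 1 / (1 - βxy * βyx))
    (hlam1 : lam1 = σ ^ 2 * c ^ 2 * (γ1 + 2 * βyx * γ2 + βyx ^ 2))
    (hlam2 : lam2 = σ ^ 2 * c ^ 2 * (βxy ^ 2 * γ1 + 2 * βxy * γ2 + 1))
    (hξxz : ξxz = c * μxz / Real.sqrt lam1)
    (hξxw : ξxw = c * βyx * μyw / Real.sqrt lam1)
    (hξyz : ξyz = c * βxy * μxz / Real.sqrt lam2)
    (hξyw : ξyw = c * μyw / Real.sqrt lam2)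
    (hk1 : k1 = ξyz / ξxz) (hk2 : k2 = ξxw / ξyw) :
    γ1 * (k1 ^ 2 - 1) * βxy ^ 2 + 2 * γ2 * k1 * (k1 - k2) * βxy
      + k1 ^ 2 * (1 - k2 ^ 2) = 0 :=
  stmt_11_general μxz μyw βxy βyx σ γ1 γ2 hσ hγ hμxz hμyw hβ c lam1 lam2 ξxz ξxw ξyz ξyw k1 k2 hc
    hlam1 hlam2 hξxz hξxw hξyz hξyw hk1 hk2
end

section
/- (Proposition 3, sensitivity identification.) In the bidirectional structural model under Assumption 2, suppose σ > 0, γ1 > γ2², μxz ≠ 0, μyw ≠ 0, βxy·βyx ≠ 1, and additionally k1² ≠ 1, where k1 = ξyz/ξxz and k2 = ξxw/ξyw are the Probit coefficient ratios. Let Δ1 = γ1·(k1² − 1)·(k2² − 1) + γ2²·(k1 − k2)². Then Δ1 ≥ 0, and there exists ε ∈ {+1, −1} such that βxy = (γ2·k1·(k2 − k1) + ε·k1·√Δ1) / (γ1·(k1² − 1)); moreover βxy has the same sign as k1 (both zero simultaneously), and if βxy ≠ 0 then βyx = k1·k2/βxy. -/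
/-!
Both Probit ratios are the structural effects rescaled by `r = √λ1 / √λ2 > 0`: `k1 = βxy · r` and
`k2 = βyx / r`. Hence `k1 k2 = βxy βyx`, `k1` has the sign of `βxy`, and `λ1 = r² λ2` becomes a
quadratic equation for `βxy` with coefficients in `γ1, γ2, k1, k2` whose discriminant is `4 k1² Δ1`.
That `Δ1 ≥ 0` also when `k1 = 0` follows from the identity
`Δ1 r² = (r² (γ1 βxy² + γ2 βxy) - (γ1 + γ2 βyx))²`.
-/

open Real

def sensitivityDiscr (γ1 γ2 k1 k2 : ℝ) : ℝ :=
  γ1 * (k1 ^ 2 - 1) * (k2 ^ 2 - 1) + γ2 ^ 2 * (k1 - k2) ^ 2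

-- `Var(u U + v V) / σ²` under Assumption 2
lemma quadForm_pos {γ1 γ2 u v : ℝ} (hγ : γ2 ^ 2 < γ1) (huv : u ≠ 0 ∨ v ≠ 0) :
    0 < γ1 * u ^ 2 + 2 * γ2 * u * v + v ^ 2 := by
  have hsplit : γ1 * u ^ 2 + 2 * γ2 * u * v + v ^ 2 = (v + γ2 * u) ^ 2 + (γ1 - γ2 ^ 2) * u ^ 2 := by
    ring
  rw [hsplit]
  rcases eq_or_ne u 0 with rfl | hu
  · have hv : v ≠ 0 := huv.resolve_left (not_not_intro rfl)
    simp only [mul_zero, add_zero, ne_eq, OfNat.ofNat_ne_zero, not_false_eq_true, zero_pow]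
    positivity
  · have : 0 < (γ1 - γ2 ^ 2) * u ^ 2 := mul_pos (sub_pos.2 hγ) (by positivity)
    positivity

lemma mul_mul_div_div_mul_div {a b m s t : ℝ} (ha : a ≠ 0) (hm : m ≠ 0) (hs : s ≠ 0) :
    a * b * m / t / (a * m / s) = b * s / t := by
  field_simp

lemma Real.sign_mul_of_pos_s12 {x r : ℝ} (hr : 0 < r) : Real.sign (x * r) = Real.sign x := by
  rcases lt_trichotomy x 0 with hx | rfl | hx
  · rw [sign_of_neg hx, sign_of_neg (mul_neg_of_neg_of_pos hx hr)]
  · simp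
  · rw [sign_of_pos hx, sign_of_pos (mul_pos hx hr)]

section Identification

variable {γ1 γ2 β β' r k1 k2 : ℝ}

lemma sensitivity_quadratic_eq_zero (hk1 : k1 = β * r) (hk2 : k2 * r = β')
    (hr2 : r ^ 2 * (β ^ 2 * γ1 + 2 * β * γ2 + 1) = γ1 + 2 * β' * γ2 + β' ^ 2) :
    γ1 * (k1 ^ 2 - 1) * (β * β) + 2 * γ2 * k1 * (k1 - k2) * β + k1 ^ 2 * (1 - k2 ^ 2) = 0 := by
  subst hk1 hk2
  linear_combination β ^ 2 * hr2

lemma sensitivityDiscr_mul_sq (hk1 : k1 = β * r) (hk2 : k2 * r = β')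
    (hr2 : r ^ 2 * (β ^ 2 * γ1 + 2 * β * γ2 + 1) = γ1 + 2 * β' * γ2 + β' ^ 2) :
    sensitivityDiscr γ1 γ2 k1 k2 * r ^ 2 = (r ^ 2 * (γ1 * β ^ 2 + γ2 * β) - (γ1 + γ2 * β')) ^ 2 := by
  subst hk1 hk2
  unfold sensitivityDiscr
  linear_combination γ1 * (1 - β ^ 2 * r ^ 2) * hr2

lemma sensitivityDiscr_nonneg (hr : r ≠ 0) (hk1 : k1 = β * r) (hk2 : k2 * r = β')
    (hr2 : r ^ 2 * (β ^ 2 * γ1 + 2 * β * γ2 + 1) = γ1 + 2 * β' * γ2 + β' ^ 2) :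
    0 ≤ sensitivityDiscr γ1 γ2 k1 k2 := by
  have h := sensitivityDiscr_mul_sq hk1 hk2 hr2
  have hr2pos : 0 < r ^ 2 := by positivity
  exact nonneg_of_mul_nonneg_left (h ▸ sq_nonneg _) hr2pos

lemma exists_sign_eq_quadratic_root (hγ1 : γ1 ≠ 0) (hk1sq : k1 ^ 2 ≠ 1)
    (hΔ : 0 ≤ sensitivityDiscr γ1 γ2 k1 k2)
    (hquad : γ1 * (k1 ^ 2 - 1) * (β * β) + 2 * γ2 * k1 * (k1 - k2) * β + k1 ^ 2 * (1 - k2 ^ 2) = 0) :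
    ∃ ε : ℝ, (ε = 1 ∨ ε = -1) ∧
      β = (γ2 * k1 * (k2 - k1) + ε * k1 * √(sensitivityDiscr γ1 γ2 k1 k2)) / (γ1 * (k1 ^ 2 - 1)) := by
  have ha : γ1 * (k1 ^ 2 - 1) ≠ 0 := mul_ne_zero hγ1 (sub_ne_zero.2 hk1sq)
  have hdiscr : discrim (γ1 * (k1 ^ 2 - 1)) (2 * γ2 * k1 * (k1 - k2)) (k1 ^ 2 * (1 - k2 ^ 2)) =
      (2 * k1 * √(sensitivityDiscr γ1 γ2 k1 k2)) * (2 * k1 * √(sensitivityDiscr γ1 γ2 k1 k2)) := by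
    have hsqrt := sq_sqrt hΔ
    unfold sensitivityDiscr at hsqrt ⊢
    rw [discrim]
    linear_combination -4 * k1 ^ 2 * hsqrt
  rcases (quadratic_eq_zero_iff ha hdiscr β).1 hquad with h | h
  · refine ⟨1, Or.inl rfl, h.trans ?_⟩
    field_simp
    ring
  · refine ⟨-1, Or.inr rfl, h.trans ?_⟩
    field_simp
    ring

end Identification

theorem stmt_12_general (μxz μyw βxy βyx σ γ1 γ2 : ℝ)
    (hσ : 0 < σ) (hγ : γ2 ^ 2 < γ1)
    (hμxz : μxz ≠ 0) (hμyw : μyw ≠ 0) (hβ : βxy * βyx ≠ 1)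
    (c lam1 lam2 ξxz ξxw ξyz ξyw k1 k2 Δ1 : ℝ)
    (hc : c = 1 / (1 - βxy * βyx))
    (hlam1 : lam1 = σ ^ 2 * c ^ 2 * (γ1 + 2 * βyx * γ2 + βyx ^ 2))
    (hlam2 : lam2 = σ ^ 2 * c ^ 2 * (βxy ^ 2 * γ1 + 2 * βxy * γ2 + 1))
    (hξxz : ξxz = c * μxz / Real.sqrt lam1)
    (hξxw : ξxw = c * βyx * μyw / Real.sqrt lam1)
    (hξyz : ξyz = c * βxy * μxz / Real.sqrt lam2)
    (hξyw : ξyw = c * μyw / Real.sqrt lam2)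
    (hk1 : k1 = ξyz / ξxz) (hk2 : k2 = ξxw / ξyw)
    (hk1sq : k1 ^ 2 ≠ 1)
    (hΔ1 : Δ1 = γ1 * (k1 ^ 2 - 1) * (k2 ^ 2 - 1) + γ2 ^ 2 * (k1 - k2) ^ 2) :
    0 ≤ Δ1 ∧
    (∃ ε : ℝ, (ε = 1 ∨ ε = -1) ∧
      βxy = (γ2 * k1 * (k2 - k1) + ε * k1 * Real.sqrt Δ1) / (γ1 * (k1 ^ 2 - 1))) ∧
    Real.sign βxy = Real.sign k1 ∧ (βxy = 0 ↔ k1 = 0) ∧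
    (βxy ≠ 0 → βyx = k1 * k2 / βxy) := by
  have hc0 : c ≠ 0 := hc ▸ one_div_ne_zero (sub_ne_zero.2 hβ.symm)
  have ha : 0 < γ1 + 2 * βyx * γ2 + βyx ^ 2 := by
    have := quadForm_pos (u := 1) (v := βyx) hγ (.inl one_ne_zero)
    linarith
  have hb : 0 < βxy ^ 2 * γ1 + 2 * βxy * γ2 + 1 := by
    have := quadForm_pos (u := βxy) (v := 1) hγ (.inr one_ne_zero)
    linarith
  have hl1 : 0 < lam1 := hlam1 ▸ by positivity
  have hl2 : 0 < lam2 := hlam2 ▸ by positivity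
  set r := √lam1 / √lam2 with hrdef
  have hr : 0 < r := by positivity
  have hk1r : k1 = βxy * r := by
    rw [hk1, hξyz, hξxz, mul_mul_div_div_mul_div hc0 hμxz (sqrt_pos.2 hl1).ne', mul_div_assoc]
  have hk2r : k2 * r = βyx := by
    rw [hk2, hξxw, hξyw, mul_mul_div_div_mul_div hc0 hμyw (sqrt_pos.2 hl2).ne', hrdef]
    field_simp
  have hr2 : r ^ 2 * (βxy ^ 2 * γ1 + 2 * βxy * γ2 + 1) = γ1 + 2 * βyx * γ2 + βyx ^ 2 := by
    rw [div_pow, sq_sqrt hl1.le, sq_sqrt hl2.le, div_mul_eq_mul_div, div_eq_iff hl2.ne', hlam1,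
      hlam2]
    ring
  have hΔ : 0 ≤ sensitivityDiscr γ1 γ2 k1 k2 := sensitivityDiscr_nonneg hr.ne' hk1r hk2r hr2
  subst hΔ1
  refine ⟨hΔ, exists_sign_eq_quadratic_root ((sq_nonneg γ2).trans_lt hγ).ne' hk1sq hΔ
      (sensitivity_quadratic_eq_zero hk1r hk2r hr2), by rw [hk1r, Real.sign_mul_of_pos_s12 hr],
    by rw [hk1r, mul_eq_zero, or_iff_left hr.ne'], fun hβ0 => ?_⟩
  rw [eq_div_iff hβ0, hk1r, ← hk2r]
  field_simp

/-- Proposition 3, sensitivity identification: the forward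
causal effect is given by the closed-form root formula with some sign choice,
it has the same sign as `k1`, and the reverse effect is `k1·k2/βxy`. -/
theorem stmt_12 (μx0 μy0 μxz μyw βxy βyx σ γ1 γ2 : ℝ)
    (hσ : 0 < σ) (hγ : γ2 ^ 2 < γ1)
    (hμxz : μxz ≠ 0) (hμyw : μyw ≠ 0) (hβ : βxy * βyx ≠ 1)
    (c lam1 lam2 ξxz ξxw ξyz ξyw k1 k2 Δ1 : ℝ)
    (hc : c = 1 / (1 - βxy * βyx))
    (hlam1 : lam1 = σ ^ 2 * c ^ 2 * (γ1 + 2 * βyx * γ2 + βyx ^ 2))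
    (hlam2 : lam2 = σ ^ 2 * c ^ 2 * (βxy ^ 2 * γ1 + 2 * βxy * γ2 + 1))
    (hξxz : ξxz = c * μxz / Real.sqrt lam1)
    (hξxw : ξxw = c * βyx * μyw / Real.sqrt lam1)
    (hξyz : ξyz = c * βxy * μxz / Real.sqrt lam2)
    (hξyw : ξyw = c * μyw / Real.sqrt lam2)
    (hk1 : k1 = ξyz / ξxz) (hk2 : k2 = ξxw / ξyw)
    (hk1sq : k1 ^ 2 ≠ 1)
    (hΔ1 : Δ1 = γ1 * (k1 ^ 2 - 1) * (k2 ^ 2 - 1) + γ2 ^ 2 * (k1 - k2) ^ 2) :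
    0 ≤ Δ1 ∧
    (∃ ε : ℝ, (ε = 1 ∨ ε = -1) ∧
      βxy = (γ2 * k1 * (k2 - k1) + ε * k1 * Real.sqrt Δ1) / (γ1 * (k1 ^ 2 - 1))) ∧
    Real.sign βxy = Real.sign k1 ∧ (βxy = 0 ↔ k1 = 0) ∧
    (βxy ≠ 0 → βyx = k1 * k2 / βxy) :=
  stmt_12_general μxz μyw βxy βyx σ γ1 γ2 hσ hγ hμxz hμyw hβ c lam1 lam2 ξxz ξxw ξyz ξyw k1 k2 Δ1 hc
    hlam1 hlam2 hξxz hξxw hξyz hξyw hk1 hk2 hk1sq hΔ1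
end

section
/- In the bidirectional structural model under Assumption 2, suppose σ > 0, γ1 > γ2², μxz ≠ 0, μyw ≠ 0 and βxy·βyx ≠ 1, and let k1 = ξyz/ξxz and k2 = ξxw/ξyw be the Probit coefficient ratios. Then the discriminant quantity Δ1 = γ1·(k1² − 1)·(k2² − 1) + γ2²·(k1 − k2)² is nonnegative. -/
/-!
Write `s₁ = √λ₁`, `s₂ = √λ₂`. The factors `c μxz`, `c μyw` cancel in the Probit ratios, leaving
`k₁ = βxy s₁ / s₂` and `k₂ = βyx s₂ / s₁`. Multiplying `Δ₁` by `s₁² s₂²` clears the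
denominators, and since `λ₁, λ₂` are the variances of `U + βyx V` and `βxy U + V` up to the common
factor `σ² c²`, the resulting polynomial is a perfect square, namely
`(σ² c² (1 - βxy βyx) (γ₁ (1 + βxy βyx) + γ₂ (βyx + βxy γ₁)))²`.
-/

namespace BidirectionalProbit

/-- `Var(x U + y V) / σ²` under Assumption 2. -/
def covForm (γ1 γ2 x y : ℝ) : ℝ := γ1 * x ^ 2 + 2 * γ2 * x * y + y ^ 2

def discriminant (γ1 γ2 k1 k2 : ℝ) : ℝ :=
  γ1 * (k1 ^ 2 - 1) * (k2 ^ 2 - 1) + γ2 ^ 2 * (k1 - k2) ^ 2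

theorem covForm_pos {γ1 γ2 x y : ℝ} (hγ : γ2 ^ 2 < γ1) (hxy : x ≠ 0 ∨ y ≠ 0) :
    0 < covForm γ1 γ2 x y := by
  have hγ1 : 0 < γ1 := (sq_nonneg γ2).trans_lt hγ
  have hsq : γ1 * covForm γ1 γ2 x y = (γ1 * x + γ2 * y) ^ 2 + (γ1 - γ2 ^ 2) * y ^ 2 := by
    unfold covForm; ring
  by_cases hy : y = 0
  · have hx := hxy.resolve_right (not_not.mpr hy)
    have : covForm γ1 γ2 x y = γ1 * x ^ 2 := by simp [covForm, hy]
    rw [this]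
    positivity
  · have hy2 : 0 < y ^ 2 := by positivity
    exact pos_of_mul_pos_right
      (hsq ▸ add_pos_of_nonneg_of_pos (sq_nonneg _) (mul_pos (sub_pos.mpr hγ) hy2)) hγ1.le

theorem discriminant_mul_sq {s1 s2 : ℝ} (hs1 : s1 ≠ 0) (hs2 : s2 ≠ 0) (γ1 γ2 a b : ℝ) :
    discriminant γ1 γ2 (a * s1 / s2) (b * s2 / s1) * (s1 ^ 2 * s2 ^ 2) =
      γ1 * (a ^ 2 * s1 ^ 2 - s2 ^ 2) * (b ^ 2 * s2 ^ 2 - s1 ^ 2) +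
        γ2 ^ 2 * (a * s1 ^ 2 - b * s2 ^ 2) ^ 2 := by
  unfold discriminant
  field_simp

theorem covForm_discriminant_eq_sq (γ1 γ2 a b : ℝ) :
    γ1 * (a ^ 2 * covForm γ1 γ2 1 b - covForm γ1 γ2 a 1) *
        (b ^ 2 * covForm γ1 γ2 a 1 - covForm γ1 γ2 1 b) +
      γ2 ^ 2 * (a * covForm γ1 γ2 1 b - b * covForm γ1 γ2 a 1) ^ 2 =
      ((1 - a * b) * (γ1 * (1 + a * b) + γ2 * (b + a * γ1))) ^ 2 := by
  unfold covForm; ring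

theorem discriminant_nonneg {s1 s2 t γ1 γ2 a b : ℝ} (hs1 : s1 ≠ 0) (hs2 : s2 ≠ 0)
    (h1 : s1 ^ 2 = t * covForm γ1 γ2 1 b) (h2 : s2 ^ 2 = t * covForm γ1 γ2 a 1) :
    0 ≤ discriminant γ1 γ2 (a * s1 / s2) (b * s2 / s1) := by
  have hprod : discriminant γ1 γ2 (a * s1 / s2) (b * s2 / s1) * (s1 ^ 2 * s2 ^ 2) =
      (t * ((1 - a * b) * (γ1 * (1 + a * b) + γ2 * (b + a * γ1)))) ^ 2 := by
    rw [discriminant_mul_sq hs1 hs2, h1, h2, mul_pow, ← covForm_discriminant_eq_sq]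
    ring
  exact nonneg_of_mul_nonneg_left (hprod ▸ sq_nonneg _) (by positivity)

end BidirectionalProbit

open BidirectionalProbit in
theorem stmt_13_general (μxz μyw βxy βyx σ γ1 γ2 : ℝ)
    (hσ : 0 < σ) (hγ : γ2 ^ 2 < γ1)
    (hμxz : μxz ≠ 0) (hμyw : μyw ≠ 0) (hβ : βxy * βyx ≠ 1)
    (c lam1 lam2 ξxz ξxw ξyz ξyw k1 k2 : ℝ)
    (hc : c = 1 / (1 - βxy * βyx))
    (hlam1 : lam1 = σ ^ 2 * c ^ 2 * (γ1 + 2 * βyx * γ2 + βyx ^ 2))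
    (hlam2 : lam2 = σ ^ 2 * c ^ 2 * (βxy ^ 2 * γ1 + 2 * βxy * γ2 + 1))
    (hξxz : ξxz = c * μxz / Real.sqrt lam1)
    (hξxw : ξxw = c * βyx * μyw / Real.sqrt lam1)
    (hξyz : ξyz = c * βxy * μxz / Real.sqrt lam2)
    (hξyw : ξyw = c * μyw / Real.sqrt lam2)
    (hk1 : k1 = ξyz / ξxz) (hk2 : k2 = ξxw / ξyw) :
    0 ≤ γ1 * (k1 ^ 2 - 1) * (k2 ^ 2 - 1) + γ2 ^ 2 * (k1 - k2) ^ 2 := by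
  have hc0 : c ≠ 0 := hc ▸ one_div_ne_zero (sub_ne_zero.mpr (Ne.symm hβ))
  have hlam1 : lam1 = σ ^ 2 * c ^ 2 * covForm γ1 γ2 1 βyx := by rw [hlam1, covForm]; ring
  have hlam2 : lam2 = σ ^ 2 * c ^ 2 * covForm γ1 γ2 βxy 1 := by rw [hlam2, covForm]; ring
  have hl1 : 0 < lam1 := by
    have := covForm_pos (x := 1) (y := βyx) hγ (.inl one_ne_zero)
    rw [hlam1]; positivity
  have hl2 : 0 < lam2 := by
    have := covForm_pos (x := βxy) (y := 1) hγ (.inr one_ne_zero)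
    rw [hlam2]; positivity
  have hs1 := (Real.sqrt_pos.mpr hl1).ne'
  have hs2 := (Real.sqrt_pos.mpr hl2).ne'
  have hk1 : k1 = βxy * √lam1 / √lam2 := by rw [hk1, hξyz, hξxz]; field_simp
  have hk2 : k2 = βyx * √lam2 / √lam1 := by rw [hk2, hξxw, hξyw]; field_simp
  rw [hk1, hk2]
  exact discriminant_nonneg hs1 hs2 (by rw [Real.sq_sqrt hl1.le, hlam1])
    (by rw [Real.sq_sqrt hl2.le, hlam2])

/-- nonnegativity of the discriminant quantity Δ1 in the
sensitivity analysis under Assumption 2. -/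
theorem stmt_13 (μx0 μy0 μxz μyw βxy βyx σ γ1 γ2 : ℝ)
    (hσ : 0 < σ) (hγ : γ2 ^ 2 < γ1)
    (hμxz : μxz ≠ 0) (hμyw : μyw ≠ 0) (hβ : βxy * βyx ≠ 1)
    (c lam1 lam2 ξxz ξxw ξyz ξyw k1 k2 : ℝ)
    (hc : c = 1 / (1 - βxy * βyx))
    (hlam1 : lam1 = σ ^ 2 * c ^ 2 * (γ1 + 2 * βyx * γ2 + βyx ^ 2))
    (hlam2 : lam2 = σ ^ 2 * c ^ 2 * (βxy ^ 2 * γ1 + 2 * βxy * γ2 + 1))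
    (hξxz : ξxz = c * μxz / Real.sqrt lam1)
    (hξxw : ξxw = c * βyx * μyw / Real.sqrt lam1)
    (hξyz : ξyz = c * βxy * μxz / Real.sqrt lam2)
    (hξyw : ξyw = c * μyw / Real.sqrt lam2)
    (hk1 : k1 = ξyz / ξxz) (hk2 : k2 = ξxw / ξyw) :
    0 ≤ γ1 * (k1 ^ 2 - 1) * (k2 ^ 2 - 1) + γ2 ^ 2 * (k1 - k2) ^ 2 :=
  stmt_13_general μxz μyw βxy βyx σ γ1 γ2 hσ hγ hμxz hμyw hβ c lam1 lam2 ξxz ξxw ξyz ξyw k1 k2 hc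
    hlam1 hlam2 hξxz hξxw hξyz hξyw hk1 hk2
end

section
/- (Corollary 2, corrected labeling.) In the extended bidirectional structural model with direct instrument effect δ of W on X° and η = 0, under Assumption 1 (confounders independent with equal variance σ² > 0), suppose βxy·βyx ≠ 1, βxy ≠ 0, μxz ≠ 0, μyw ≠ 0 and βxy·δ + μyw ≠ 0. Define c = 1/(1 − βxy·βyx), λ1 = σ²c²(1 + βyx²), λ2 = σ²c²(1 + βxy²), ξxz = c·μxz/√λ1, ξxw = c(δ + βyx·μyw)/√λ1, ξyz = c·βxy·μxz/√λ2, ξyw = c(βxy·δ + μyw)/√λ2, δ0 = δ/μyw, t1 = ξxw/ξxz, t2 = ξyz/ξyw, t3 = ξxz/ξyz, t4 = ξxw/ξyw, s4 = t3t4 + t3t4·δ0²(t1t2 − 1)² − t1t2, s5 = 2t1t2t3t4·δ0(t1t2 − 1), s6 = t1t2(t1t2t3t4 − 1). Then: (i) s4·βxy² + s5·βxy + s6 = 0; (ii) βxy has the same sign as t3; and (iii) βyx = δ0(t1t2 − 1) + t1t2/βxy. -/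
/-!
Everything is read off the reduced form. In each product or ratio of the standardized
coefficients `t1 t2` and `t3 t4` the common factor `c` cancels, and so do the scales `√λ1`,
`√λ2`, apart from `λ2 / λ1 = (1 + βxy²) / (1 + βyx²)`; what remains are two relations between
the ratios and the structural coefficients, one linear in `βyx` (giving (iii)) and one
quadratic. Substituting `βxy βyx` from the linear relation into the quadratic one gives (i).
Finally `t3 = (√λ2 / √λ1) / βxy` with a positive numerator, giving (ii).
-/

theorem Real.sign_div_of_pos {k : ℝ} (hk : 0 < k) (x : ℝ) :
    Real.sign (k / x) = Real.sign x := by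
  rcases lt_trichotomy x 0 with hx | rfl | hx
  · rw [Real.sign_of_neg hx, Real.sign_of_neg (div_neg_of_pos_of_neg hk hx)]
  · rw [div_zero]
  · rw [Real.sign_of_pos hx, Real.sign_of_pos (div_pos hk hx)]

namespace BidirectionalSEM

section Ratios

variable {c a b m p q β : ℝ}

theorem ratio_prod_eq (hc : c ≠ 0) (ha : a ≠ 0) (hb : b ≠ 0) (hm : m ≠ 0) :
    (c * p / a) / (c * m / a) * ((c * β * m / b) / (c * q / b)) = β * p / q := by
  field_simp

theorem ratio_div_eq (hc : c ≠ 0) (hm : m ≠ 0) :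
    (c * m / a) / (c * β * m / b) = b / a / β := by
  field_simp

theorem ratio_cross_eq (hc : c ≠ 0) :
    (c * p / a) / (c * q / b) = b / a * (p / q) := by
  field_simp

end Ratios

/-- Solving `t1 t2 = βxy (δ + βyx μyw) / (βxy δ + μyw)` for `βyx βxy`, with `δ0 = δ / μyw`. -/
theorem relDirectEffect_mul_add_eq (βxy βyx δ μyw : ℝ) (hμyw : μyw ≠ 0)
    (hyw : βxy * δ + μyw ≠ 0) :
    δ / μyw * (βxy * (δ + βyx * μyw) / (βxy * δ + μyw) - 1) * βxy
      + βxy * (δ + βyx * μyw) / (βxy * δ + μyw) = βyx * βxy := by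
  rw [mul_comm βxy δ] at hyw ⊢
  field_simp
  ring

/-- With `r = t1 t2`, `s = t3 t4`, `d = δ0`, `x = βxy`, `y = βyx`: eliminating `y`. -/
theorem quadratic_eq_zero_of_relations {r s d x y : ℝ} (hlin : d * (r - 1) * x + r = y * x)
    (hscale : s * x ^ 2 * (1 + y ^ 2) = r * (1 + x ^ 2)) :
    (s + s * d ^ 2 * (r - 1) ^ 2 - r) * x ^ 2 + 2 * r * s * d * (r - 1) * x
      + r * (r * s - 1) = 0 := by
  linear_combination s * (d * (r - 1) * x + r + y * x) * hlin + hscale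

end BidirectionalSEM

theorem stmt_15_general (μxz μyw δ βxy βyx σ : ℝ)
    (hσ : 0 < σ) (hβ : βxy * βyx ≠ 1) (hβxy : βxy ≠ 0)
    (hμxz : μxz ≠ 0) (hμyw : μyw ≠ 0)
    (hyw : βxy * δ + μyw ≠ 0)
    (c lam1 lam2 ξxz ξxw ξyz ξyw δ0 t1 t2 t3 t4 s4 s5 s6 : ℝ)
    (hc : c = 1 / (1 - βxy * βyx))
    (hlam1 : lam1 = σ ^ 2 * c ^ 2 * (1 + βyx ^ 2))
    (hlam2 : lam2 = σ ^ 2 * c ^ 2 * (1 + βxy ^ 2))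
    (hξxz : ξxz = c * μxz / Real.sqrt lam1)
    (hξxw : ξxw = c * (δ + βyx * μyw) / Real.sqrt lam1)
    (hξyz : ξyz = c * βxy * μxz / Real.sqrt lam2)
    (hξyw : ξyw = c * (βxy * δ + μyw) / Real.sqrt lam2)
    (hδ0 : δ0 = δ / μyw)
    (ht1 : t1 = ξxw / ξxz) (ht2 : t2 = ξyz / ξyw)
    (ht3 : t3 = ξxz / ξyz) (ht4 : t4 = ξxw / ξyw)
    (hs4 : s4 = t3 * t4 + t3 * t4 * δ0 ^ 2 * (t1 * t2 - 1) ^ 2 - t1 * t2)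
    (hs5 : s5 = 2 * t1 * t2 * t3 * t4 * δ0 * (t1 * t2 - 1))
    (hs6 : s6 = t1 * t2 * (t1 * t2 * t3 * t4 - 1)) :
    s4 * βxy ^ 2 + s5 * βxy + s6 = 0 ∧
    Real.sign βxy = Real.sign t3 ∧
    βyx = δ0 * (t1 * t2 - 1) + t1 * t2 / βxy := by
  have hc0 : c ≠ 0 := by rw [hc]; exact one_div_ne_zero (sub_ne_zero.mpr hβ.symm)
  have hlam1_pos : 0 < lam1 := by rw [hlam1]; positivity
  have hlam2_pos : 0 < lam2 := by rw [hlam2]; positivity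
  have hsqrt1_pos := Real.sqrt_pos.mpr hlam1_pos
  have hsqrt2_pos := Real.sqrt_pos.mpr hlam2_pos
  have hr : t1 * t2 = βxy * (δ + βyx * μyw) / (βxy * δ + μyw) := by
    rw [ht1, ht2, hξxw, hξxz, hξyz, hξyw]
    exact BidirectionalSEM.ratio_prod_eq hc0 hsqrt1_pos.ne' hsqrt2_pos.ne' hμxz
  have ht3' : t3 = Real.sqrt lam2 / Real.sqrt lam1 / βxy := by
    rw [ht3, hξxz, hξyz]
    exact BidirectionalSEM.ratio_div_eq hc0 hμxz
  have hlin : δ0 * (t1 * t2 - 1) * βxy + t1 * t2 = βyx * βxy := by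
    rw [hr, hδ0]
    exact BidirectionalSEM.relDirectEffect_mul_add_eq βxy βyx δ μyw hμyw hyw
  have hscale : t3 * t4 * βxy ^ 2 * (1 + βyx ^ 2) = t1 * t2 * (1 + βxy ^ 2) := by
    have hsq : (Real.sqrt lam2 / Real.sqrt lam1) ^ 2 * (1 + βyx ^ 2) = 1 + βxy ^ 2 := by
      rw [div_pow, Real.sq_sqrt hlam1_pos.le, Real.sq_sqrt hlam2_pos.le, hlam1, hlam2]
      field_simp
    rw [ht3', ht4, hξxw, hξyw, BidirectionalSEM.ratio_cross_eq hc0, hr, ← hsq]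
    field_simp
  refine ⟨?_, ?_, ?_⟩
  · rw [hs4, hs5, hs6]
    linear_combination BidirectionalSEM.quadratic_eq_zero_of_relations hlin hscale
  · rw [ht3', Real.sign_div_of_pos (div_pos hsqrt2_pos hsqrt1_pos)]
  · field_simp
    linear_combination -hlin

/-- Corollary 2: sensitivity analysis when the instrument `W`
has a direct effect `δ` on `X°` and `Z` is valid (`η = 0`), under Assumption 1. -/
theorem stmt_15 (μx0 μy0 μxz μyw δ βxy βyx σ : ℝ)
    (hσ : 0 < σ) (hβ : βxy * βyx ≠ 1) (hβxy : βxy ≠ 0)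
    (hμxz : μxz ≠ 0) (hμyw : μyw ≠ 0)
    (hyw : βxy * δ + μyw ≠ 0)
    (c lam1 lam2 ξxz ξxw ξyz ξyw δ0 t1 t2 t3 t4 s4 s5 s6 : ℝ)
    (hc : c = 1 / (1 - βxy * βyx))
    (hlam1 : lam1 = σ ^ 2 * c ^ 2 * (1 + βyx ^ 2))
    (hlam2 : lam2 = σ ^ 2 * c ^ 2 * (1 + βxy ^ 2))
    (hξxz : ξxz = c * μxz / Real.sqrt lam1)
    (hξxw : ξxw = c * (δ + βyx * μyw) / Real.sqrt lam1)
    (hξyz : ξyz = c * βxy * μxz / Real.sqrt lam2)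
    (hξyw : ξyw = c * (βxy * δ + μyw) / Real.sqrt lam2)
    (hδ0 : δ0 = δ / μyw)
    (ht1 : t1 = ξxw / ξxz) (ht2 : t2 = ξyz / ξyw)
    (ht3 : t3 = ξxz / ξyz) (ht4 : t4 = ξxw / ξyw)
    (hs4 : s4 = t3 * t4 + t3 * t4 * δ0 ^ 2 * (t1 * t2 - 1) ^ 2 - t1 * t2)
    (hs5 : s5 = 2 * t1 * t2 * t3 * t4 * δ0 * (t1 * t2 - 1))
    (hs6 : s6 = t1 * t2 * (t1 * t2 * t3 * t4 - 1)) :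
    s4 * βxy ^ 2 + s5 * βxy + s6 = 0 ∧
    Real.sign βxy = Real.sign t3 ∧
    βyx = δ0 * (t1 * t2 - 1) + t1 * t2 / βxy :=
  stmt_15_general μxz μyw δ βxy βyx σ hσ hβ hβxy hμxz hμyw hyw c lam1 lam2 ξxz ξxw ξyz ξyw δ0 t1 t2
    t3 t4 s4 s5 s6 hc hlam1 hlam2 hξxz hξxw hξyz hξyw hδ0 ht1 ht2 ht3 ht4 hs4 hs5 hs6
end

section
/- (Corollary 3, case βxy·βyx < 1.) In the extended bidirectional structural model with direct instrument effects η and δ and a single confounder U = V ~ N(0, σ²) (perfect positive correlation: γ1 = 1, γ2 = 1), suppose σ > 0, βxy·βyx < 1, 1 + βxy > 0, 1 + βyx > 0, μxz ≠ η and μyw ≠ δ. Define c = 1/(1 − βxy·βyx), λ1 = σ²c²(1 + βyx)², λ2 = σ²c²(1 + βxy)², ξxz = c(μxz + βyx·η)/√λ1, ξxw = c(δ + βyx·μyw)/√λ1, ξyz = c(βxy·μxz + η)/√λ2, ξyw = c(βxy·δ + μyw)/√λ2, and the signal-to-noise ratios η0 = η/σ, δ0 = δ/σ. Then the bidirectional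 causal effects are identified by βyx = ((ξyz − ξxz)(ξxw − δ0)) / ((ξxw − ξyw)(ξxz − η0)) and βxy = ((ξxw − ξyw)(ξyz − η0)) / ((ξyz − ξxz)(ξyw − δ0)). -/
/-- Corollary 3, case βxy·βyx < 1: identification of the
bidirectional causal effects with a single confounder (γ1 = γ2 = 1) and
signal-to-noise reparameterized direct instrument effects. -/
theorem stmt_16 (μx0 μy0 μxz μyw η δ βxy βyx σ : ℝ)
    (hσ : 0 < σ) (hβ : βxy * βyx < 1)
    (hβxy : 0 < 1 + βxy) (hβyx : 0 < 1 + βyx)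
    (hz : μxz ≠ η) (hw : μyw ≠ δ)
    (c lam1 lam2 ξxz ξxw ξyz ξyw η0 δ0 : ℝ)
    (hc : c = 1 / (1 - βxy * βyx))
    (hlam1 : lam1 = σ ^ 2 * c ^ 2 * (1 + βyx) ^ 2)
    (hlam2 : lam2 = σ ^ 2 * c ^ 2 * (1 + βxy) ^ 2)
    (hξxz : ξxz = c * (μxz + βyx * η) / Real.sqrt lam1)
    (hξxw : ξxw = c * (δ + βyx * μyw) / Real.sqrt lam1)
    (hξyz : ξyz = c * (βxy * μxz + η) / Real.sqrt lam2)
    (hξyw : ξyw = c * (βxy * δ + μyw) / Real.sqrt lam2)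
    (hη0 : η0 = η / σ) (hδ0 : δ0 = δ / σ) :
    βyx = ((ξyz - ξxz) * (ξxw - δ0)) / ((ξxw - ξyw) * (ξxz - η0)) ∧
    βxy = ((ξxw - ξyw) * (ξyz - η0)) / ((ξyz - ξxz) * (ξyw - δ0)) := by
  have hp : 0 < 1 - βxy * βyx := by linarith
  have hc0 : 0 < c := by rw [hc]; positivity
  have hs1 : Real.sqrt lam1 = σ * c * (1 + βyx) := by
    rw [hlam1, show σ ^ 2 * c ^ 2 * (1 + βyx) ^ 2 = (σ * c * (1 + βyx)) ^ 2 by ring]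
    exact Real.sqrt_sq (by positivity)
  have hs2 : Real.sqrt lam2 = σ * c * (1 + βxy) := by
    rw [hlam2, show σ ^ 2 * c ^ 2 * (1 + βxy) ^ 2 = (σ * c * (1 + βxy)) ^ 2 by ring]
    exact Real.sqrt_sq (by positivity)
  have hσ0 : σ ≠ 0 := ne_of_gt hσ
  have hA : (1 + βxy) ≠ 0 := ne_of_gt hβxy
  have hB : (1 + βyx) ≠ 0 := ne_of_gt hβyx
  have hcne : c ≠ 0 := ne_of_gt hc0
  have hpne : (1 - βxy * βyx) ≠ 0 := ne_of_gt hp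
  have hzz : μxz - η ≠ 0 := sub_ne_zero.mpr hz
  have hww : μyw - δ ≠ 0 := sub_ne_zero.mpr hw
  have e1 : ξxz - η0 = (μxz - η) / (σ * (1 + βyx)) := by
    rw [hξxz, hη0, hs1]; field_simp; ring
  have e2 : ξyz - ξxz = (1 - βxy * βyx) * (η - μxz) / (σ * (1 + βxy) * (1 + βyx)) := by
    rw [hξyz, hξxz, hs1, hs2]; field_simp; ring
  have e3 : ξxw - δ0 = βyx * (μyw - δ) / (σ * (1 + βyx)) := by
    rw [hξxw, hδ0, hs1]; field_simp; ring
  have e4 : ξxw - ξyw = (1 - βxy * βyx) * (δ - μyw) / (σ * (1 + βxy) * (1 + βyx)) := by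
    rw [hξxw, hξyw, hs1, hs2]; field_simp; ring
  have e5 : ξyz - η0 = βxy * (μxz - η) / (σ * (1 + βxy)) := by
    rw [hξyz, hη0, hs2]; field_simp; ring
  have e6 : ξyw - δ0 = (μyw - δ) / (σ * (1 + βxy)) := by
    rw [hξyw, hδ0, hs2]; field_simp; ring
  have hzz' : η - μxz ≠ 0 := sub_ne_zero.mpr (Ne.symm hz)
  have hww' : δ - μyw ≠ 0 := sub_ne_zero.mpr (Ne.symm hw)
  have hD1 : (1 - βxy * βyx) * (δ - μyw) / (σ * (1 + βxy) * (1 + βyx)) *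
      ((μxz - η) / (σ * (1 + βyx))) ≠ 0 := by
    apply mul_ne_zero <;> apply div_ne_zero
    · exact mul_ne_zero hpne hww'
    · exact mul_ne_zero (mul_ne_zero hσ0 hA) hB
    · exact hzz
    · exact mul_ne_zero hσ0 hB
  have hD2 : (1 - βxy * βyx) * (η - μxz) / (σ * (1 + βxy) * (1 + βyx)) *
      ((μyw - δ) / (σ * (1 + βxy))) ≠ 0 := by
    apply mul_ne_zero <;> apply div_ne_zero
    · exact mul_ne_zero hpne hzz'
    · exact mul_ne_zero (mul_ne_zero hσ0 hA) hB
    · exact hww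
    · exact mul_ne_zero hσ0 hA
  rw [e1, e2, e3, e4, e5, e6]
  constructor
  · rw [eq_div_iff hD1]; field_simp; ring
  · rw [eq_div_iff hD2]; field_simp; ring
end

section
/- (Corollary 3, case βxy·βyx > 1.) In the extended bidirectional structural model with direct instrument effects η and δ and a single confounder U = V ~ N(0, σ²) (perfect positive correlation: γ1 = 1, γ2 = 1), suppose σ > 0, βxy·βyx > 1, 1 + βxy > 0, 1 + βyx > 0, μxz ≠ η and μyw ≠ δ. Define c = 1/(1 − βxy·βyx), λ1 = σ²c²(1 + βyx)², λ2 = σ²c²(1 + βxy)², ξxz = c(μxz + βyx·η)/√λ1, ξxw = c(δ + βyx·μyw)/√λ1, ξyz = c(βxy·μxz + η)/√λ2, ξyw = c(βxy·δ + μyw)/√λ2, and the signal-to-noise ratios η0 = η/σ, δ0 = δ/σ. Then the bidirectional causal effects are identified by βyx = ((ξyz − ξxz)(ξxw + δ0)) / ((ξxw − ξyw)(ξxz + η0)) and βxy = ((ξxw − ξyw)(ξyz + η0)) / ((ξyz − ξxz)(ξyw + δ0)). -/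
/-!
Since `βxy * βyx > 1` we have `c < 0`, so `√λ1 = -c σ (1 + βyx)` and `√λ2 = -c σ (1 + βxy)`.
Shifting by the signal-to-noise ratios then removes the confounded parts:
`ξxz + η0 = (η - μxz) / (σ (1 + βyx))`, `ξyz + η0 = βxy (η - μxz) / (σ (1 + βxy))`, and likewise
for the instrument `W`. The differences `ξyz - ξxz` and `ξxw - ξyw` are then both proportional to
`βxy * βyx - 1` with the same factor, so the two ratios collapse to `βyx` and `βxy`.
-/

theorem sqrt_sq_mul_sq_mul_sq_of_nonpos {σ c t : ℝ} (hσ : 0 ≤ σ) (hc : c ≤ 0) (ht : 0 ≤ t) :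
    √(σ ^ 2 * c ^ 2 * t ^ 2) = σ * (-c) * t := by
  rw [show σ ^ 2 * c ^ 2 * t ^ 2 = (σ * (-c) * t) ^ 2 by ring]
  exact Real.sqrt_sq (by have := neg_nonneg.2 hc; positivity)

theorem div_sqrt_add_div_eq_of_neg {σ c β : ℝ} (hσ : 0 < σ) (hc : c < 0) (hβ : 0 < 1 + β)
    (u v : ℝ) :
    c * (u + β * v) / √(σ ^ 2 * c ^ 2 * (1 + β) ^ 2) + v / σ = (v - u) / (σ * (1 + β)) := by
  rw [sqrt_sq_mul_sq_mul_sq_of_nonpos hσ.le hc.le hβ.le]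
  have := hc.ne
  field_simp
  ring

theorem div_sqrt_add_div_eq_mul_of_neg {σ c β : ℝ} (hσ : 0 < σ) (hc : c < 0) (hβ : 0 < 1 + β)
    (u v : ℝ) :
    c * (β * u + v) / √(σ ^ 2 * c ^ 2 * (1 + β) ^ 2) + v / σ
      = β * (v - u) / (σ * (1 + β)) := by
  rw [sqrt_sq_mul_sq_mul_sq_of_nonpos hσ.le hc.le hβ.le]
  have := hc.ne
  field_simp
  ring

theorem eq_ratio_of_shifted_coefficients {xz yz xw yw e d a b β β' σ : ℝ} (hσ : σ ≠ 0)
    (ha : a ≠ 0) (hb : b ≠ 0) (hβ : 1 + β ≠ 0) (hβ' : 1 + β' ≠ 0) (hββ' : β * β' ≠ 1)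
    (hxz : xz + e = a / (σ * (1 + β))) (hyz : yz + e = β' * a / (σ * (1 + β')))
    (hxw : xw + d = β * b / (σ * (1 + β))) (hyw : yw + d = b / (σ * (1 + β'))) :
    β = ((yz - xz) * (xw + d)) / ((xw - yw) * (xz + e)) ∧
    β' = ((xw - yw) * (yz + e)) / ((yz - xz) * (yw + d)) := by
  have hββ'' : β * β' - 1 ≠ 0 := sub_ne_zero.2 hββ'
  have hz : yz - xz = a * (β * β' - 1) / (σ * (1 + β) * (1 + β')) := by
    rw [show yz - xz = (yz + e) - (xz + e) by ring, hxz, hyz]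
    field_simp
    ring
  have hw : xw - yw = b * (β * β' - 1) / (σ * (1 + β) * (1 + β')) := by
    rw [show xw - yw = (xw + d) - (yw + d) by ring, hxw, hyw]
    field_simp
    ring
  rw [hz, hw, hxz, hyz, hxw, hyw]
  constructor
  · field_simp
  · rw [mul_comm β β'] at hββ''
    field_simp

theorem stmt_17_general (μxz μyw η δ βxy βyx σ : ℝ)
    (hσ : 0 < σ) (hβ : 1 < βxy * βyx)
    (hβxy : 0 < 1 + βxy) (hβyx : 0 < 1 + βyx)
    (hz : μxz ≠ η) (hw : μyw ≠ δ)
    (c lam1 lam2 ξxz ξxw ξyz ξyw η0 δ0 : ℝ)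
    (hc : c = 1 / (1 - βxy * βyx))
    (hlam1 : lam1 = σ ^ 2 * c ^ 2 * (1 + βyx) ^ 2)
    (hlam2 : lam2 = σ ^ 2 * c ^ 2 * (1 + βxy) ^ 2)
    (hξxz : ξxz = c * (μxz + βyx * η) / Real.sqrt lam1)
    (hξxw : ξxw = c * (δ + βyx * μyw) / Real.sqrt lam1)
    (hξyz : ξyz = c * (βxy * μxz + η) / Real.sqrt lam2)
    (hξyw : ξyw = c * (βxy * δ + μyw) / Real.sqrt lam2)
    (hη0 : η0 = η / σ) (hδ0 : δ0 = δ / σ) :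
    βyx = ((ξyz - ξxz) * (ξxw + δ0)) / ((ξxw - ξyw) * (ξxz + η0)) ∧
    βxy = ((ξxw - ξyw) * (ξyz + η0)) / ((ξyz - ξxz) * (ξyw + δ0)) := by
  have hc_neg : c < 0 := by
    rw [hc]
    exact one_div_neg.2 (by linarith)
  refine eq_ratio_of_shifted_coefficients hσ.ne' (sub_ne_zero.2 hz.symm) (sub_ne_zero.2 hw.symm)
    hβyx.ne' hβxy.ne' (by linarith) ?_ ?_ ?_ ?_
  · rw [hξxz, hlam1, hη0]
    exact div_sqrt_add_div_eq_of_neg hσ hc_neg hβyx μxz η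
  · rw [hξyz, hlam2, hη0]
    exact div_sqrt_add_div_eq_mul_of_neg hσ hc_neg hβxy μxz η
  · rw [hξxw, hlam1, hδ0, add_comm δ]
    exact div_sqrt_add_div_eq_mul_of_neg hσ hc_neg hβyx μyw δ
  · rw [hξyw, hlam2, hδ0, add_comm (βxy * δ)]
    exact div_sqrt_add_div_eq_of_neg hσ hc_neg hβxy μyw δ

/-- Corollary 3, case βxy·βyx > 1: identification of the
bidirectional causal effects with a single confounder (γ1 = γ2 = 1) and
signal-to-noise reparameterized direct instrument effects. -/
theorem stmt_17 (μx0 μy0 μxz μyw η δ βxy βyx σ : ℝ)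
    (hσ : 0 < σ) (hβ : 1 < βxy * βyx)
    (hβxy : 0 < 1 + βxy) (hβyx : 0 < 1 + βyx)
    (hz : μxz ≠ η) (hw : μyw ≠ δ)
    (c lam1 lam2 ξxz ξxw ξyz ξyw η0 δ0 : ℝ)
    (hc : c = 1 / (1 - βxy * βyx))
    (hlam1 : lam1 = σ ^ 2 * c ^ 2 * (1 + βyx) ^ 2)
    (hlam2 : lam2 = σ ^ 2 * c ^ 2 * (1 + βxy) ^ 2)
    (hξxz : ξxz = c * (μxz + βyx * η) / Real.sqrt lam1)
    (hξxw : ξxw = c * (δ + βyx * μyw) / Real.sqrt lam1)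
    (hξyz : ξyz = c * (βxy * μxz + η) / Real.sqrt lam2)
    (hξyw : ξyw = c * (βxy * δ + μyw) / Real.sqrt lam2)
    (hη0 : η0 = η / σ) (hδ0 : δ0 = δ / σ) :
    βyx = ((ξyz - ξxz) * (ξxw + δ0)) / ((ξxw - ξyw) * (ξxz + η0)) ∧
    βxy = ((ξxw - ξyw) * (ξyz + η0)) / ((ξyz - ξxz) * (ξyw + δ0)) :=
  stmt_17_general μxz μyw η δ βxy βyx σ hσ hβ hβxy hβyx hz hw c lam1 lam2 ξxz ξxw ξyz ξyw η0 δ0 hc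
    hlam1 hlam2 hξxz hξxw hξyz hξyw hη0 hδ0
end
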